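/- Let ρ be a positive definite density matrix on a bipartite space ℂᵐ ⊗ ℂⁿ (Tr ρ = 1) whose partial transpose ρ^Γ is not positive semidefinite. Then the Rains bound of ρ is strictly smaller than its logarithmic negativity: inf{ S(ρ‖τ) : τ positive definite, ‖τ^Γ‖₁ ≤ 1 } < log ‖ρ^Γ‖₁. -/

import Mathlib

open Matrix
open scoped ComplexOrder

noncomputable def traceNorm {ι : Type*} [Fintype ι] [DecidableEq ι]
    (A : Matrix ι ι ℂ) : ℝ :=
  (((Matrix.posSemidef_conjTranspose_mul_self A).1.eigenvectorUnitary : Matrix ι ι ℂ) *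
    Matrix.diagonal (((↑) : ℝ → ℂ) ∘ (Real.sqrt ∘ (Matrix.posSemidef_conjTranspose_mul_self A).1.eigenvalues)) *
    (star (Matrix.posSemidef_conjTranspose_mul_self A).1.eigenvectorUnitary : Matrix ι ι ℂ)).trace.re

noncomputable def mfun {ι : Type*} [Fintype ι] [DecidableEq ι] (g : ℝ → ℝ)
    (A : Matrix ι ι ℂ) : Matrix ι ι ℂ :=
  if hA : A.IsHermitian then
    (hA.eigenvectorUnitary : Matrix ι ι ℂ) *
      Matrix.diagonal (fun i => (g (hA.eigenvalues i) : ℂ)) *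
      (star hA.eigenvectorUnitary : Matrix ι ι ℂ)
  else 0

noncomputable def divDiff {ι : Type*} (g : ℝ → ℝ) (a : ι → ℝ) : Matrix ι ι ℝ :=
  Matrix.of fun i j =>
    if a i = a j then deriv g (a i) else (g (a i) - g (a j)) / (a i - a j)

noncomputable def Dop {ι : Type*} [Fintype ι] [DecidableEq ι] (g : ℝ → ℝ)
    {A : Matrix ι ι ℂ} (hA : A.IsHermitian) (B : Matrix ι ι ℂ) : Matrix ι ι ℂ :=
  (hA.eigenvectorUnitary : Matrix ι ι ℂ) *
    (((divDiff g hA.eigenvalues).map Complex.ofReal) ⊙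
      ((star hA.eigenvectorUnitary : Matrix ι ι ℂ) * B *
        (hA.eigenvectorUnitary : Matrix ι ι ℂ))) *
    (star hA.eigenvectorUnitary : Matrix ι ι ℂ)

noncomputable def relEnt {ι : Type*} [Fintype ι] [DecidableEq ι]
    (ρ σ : Matrix ι ι ℂ) : ℝ :=
  ((ρ * (mfun Real.log ρ - mfun Real.log σ)).trace).re

def ptrans {m n : Type*} (A : Matrix (m × n) (m × n) ℂ) : Matrix (m × n) (m × n) ℂ :=
  Matrix.of fun p q => A (p.1, q.2) (q.1, p.2)

/-!
For `ε > 0` let `N` be the dimension and `τ_ε = (ρ + ε) / (‖ρ^Γ‖₁ + ε N)`. Then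
`τ_ε^Γ = (ρ^Γ + ε) / (‖ρ^Γ‖₁ + ε N)` has trace norm at most `1`, so `τ_ε` is feasible for the
Rains bound, and since `τ_ε` is a function of `ρ`, with `λᵢ` the eigenvalues of `ρ`,
`S(ρ‖τ_ε) = ∑ λᵢ (log λᵢ - log (λᵢ + ε)) + log (‖ρ^Γ‖₁ + ε N)`.
This equals `LN(ρ)` at `ε = 0` and has derivative `N / ‖ρ^Γ‖₁ - N` there, which is negative because
`ρ^Γ` has unit trace and a negative eigenvalue, i.e. `‖ρ^Γ‖₁ > 1`.
The infimum is a genuine one (not the junk value of `sInf` on a set unbounded below): every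
feasible `τ` has eigenvalues at most `Tr τ = Tr τ^Γ ≤ 1`, so `log τ ≤ 0` and `S(ρ‖τ) ≥ ∑ λᵢ log λᵢ`.
-/

lemma HasDerivAt.exists_gt_lt_of_neg {f : ℝ → ℝ} {f' x : ℝ} (hf : HasDerivAt f f' x)
    (hf' : f' < 0) : ∃ y > x, f y < f x := by
  obtain ⟨y, hslope, hxy⟩ := ((hf.hasDerivWithinAt (s := Set.Ioi x)).limsup_slope_le'
    (lt_irrefl x) hf' |>.and self_mem_nhdsWithin).exists
  refine ⟨y, hxy, ?_⟩
  rw [slope_def_field, div_neg_iff] at hslope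
  rcases hslope with ⟨-, h⟩ | ⟨h, -⟩
  · linarith [sub_pos.mpr hxy]
  · linarith

lemma exists_pos_sum_mul_log_sub_log_add_lt {ι : Type*} [Fintype ι] [Nonempty ι] {p : ι → ℝ}
    (hp : ∀ i, 0 < p i) {t : ℝ} (ht : 1 < t) :
    ∃ ε > 0, ∑ i, p i * (Real.log (p i) - Real.log (p i + ε)) +
      Real.log (t + ε * Fintype.card ι) < Real.log t := by
  set N : ℝ := (Fintype.card ι : ℝ)
  have hN : 0 < N := by simp [N, Fintype.card_pos]
  have hderiv : HasDerivAt (fun ε => ∑ i, p i * (Real.log (p i) - Real.log (p i + ε)) +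
      Real.log (t + ε * N)) (N / t - N) 0 := by
    have hsum := HasDerivAt.fun_sum (u := Finset.univ) fun i _ =>
      (((hasDerivAt_id (0 : ℝ)).const_add (p i)).log (by simp [(hp i).ne'])).const_sub
        (Real.log (p i)) |>.const_mul (p i)
    have hlog := (((hasDerivAt_id (0 : ℝ)).mul_const N).const_add t).log
      (by simp only [id_eq, zero_mul, add_zero]; linarith)
    refine (hsum.add hlog).congr_deriv ?_
    simp only [id_eq, add_zero, one_div, mul_neg, ne_eq, (hp _).ne', not_false_eq_true,
      mul_inv_cancel₀, Finset.sum_neg_distrib, Finset.sum_const, Finset.card_univ, nsmul_eq_mul,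
      mul_one, one_mul, zero_mul, N]
    ring
  obtain ⟨ε, hε, hlt⟩ := hderiv.exists_gt_lt_of_neg (by
    rw [sub_neg, div_lt_iff₀ (by linarith)]; nlinarith)
  exact ⟨ε, hε, by simpa using hlt⟩

section SpectralCalculus

variable {ι : Type*} [Fintype ι] [DecidableEq ι]

lemma mfun_eq_cfc {A : Matrix ι ι ℂ} (hA : A.IsHermitian) (g : ℝ → ℝ) : mfun g A = cfc g A := by
  rw [mfun, dif_pos hA, hA.cfc_eq, IsHermitian.cfc, Unitary.conjStarAlgAut_apply]
  rfl

lemma Matrix.IsHermitian.trace_cfc {A : Matrix ι ι ℂ} (hA : A.IsHermitian) (f : ℝ → ℝ) :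
    (cfc f A).trace = ∑ i, (f (hA.eigenvalues i) : ℂ) := by
  rw [hA.cfc_eq, IsHermitian.cfc, Unitary.conjStarAlgAut_apply, trace_mul_cycle,
    Unitary.coe_star_mul_self, one_mul, trace_diagonal]
  rfl

open scoped MatrixOrder in
lemma Matrix.IsHermitian.posSemidef_cfc {A : Matrix ι ι ℂ} (hA : A.IsHermitian) {f : ℝ → ℝ}
    (hf : ∀ i, 0 ≤ f (hA.eigenvalues i)) : (cfc f A).PosSemidef := by
  rw [← nonneg_iff_posSemidef]
  refine cfc_nonneg fun x hx => ?_
  obtain ⟨i, rfl⟩ := hA.spectrum_real_eq_range_eigenvalues ▸ hx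
  exact hf i

lemma cfc_affine {A : Matrix ι ι ℂ} (hA : A.IsHermitian) (a b : ℝ) :
    cfc (fun x => a * (x + b)) A = a • (A + b • (1 : Matrix ι ι ℂ)) := by
  rw [cfc_const_mul .., cfc_add_const .., cfc_id' .., Algebra.algebraMap_eq_smul_one]

open scoped MatrixOrder in
lemma Matrix.PosSemidef.trace_mul_nonneg {A B : Matrix ι ι ℂ} (hA : A.PosSemidef)
    (hB : B.PosSemidef) : 0 ≤ (A * B).trace := by
  obtain ⟨S, rfl⟩ := CStarAlgebra.nonneg_iff_eq_star_mul_self.mp hB.nonneg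
  rw [← mul_assoc, trace_mul_cycle, star_eq_conjTranspose]
  exact (hA.mul_mul_conjTranspose_same S).trace_nonneg

lemma Matrix.PosSemidef.eigenvalues_le_of_re_trace_le {A : Matrix ι ι ℂ} (hA : A.PosSemidef)
    {c : ℝ} (hc : A.trace.re ≤ c) (i : ι) : hA.1.eigenvalues i ≤ c :=
  calc hA.1.eigenvalues i ≤ ∑ j, hA.1.eigenvalues j :=
        Finset.single_le_sum (fun j _ => hA.eigenvalues_nonneg j) (Finset.mem_univ i)
    _ = A.trace.re := by simp [hA.1.trace_eq_sum_eigenvalues]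
    _ ≤ c := hc

lemma traceNorm_eq_re_trace_cfc_sqrt (A : Matrix ι ι ℂ) :
    traceNorm A = (cfc Real.sqrt (Aᴴ * A)).trace.re := by
  rw [(isHermitian_conjTranspose_mul_self A).cfc_eq, IsHermitian.cfc, Unitary.conjStarAlgAut_apply]
  rfl

lemma traceNorm_cfc {A : Matrix ι ι ℂ} (hA : A.IsHermitian) (f : ℝ → ℝ) :
    traceNorm (cfc f A) = ∑ i, |f (hA.eigenvalues i)| := by
  have hfin := A.finite_real_spectrum
  have hsq : (cfc f A)ᴴ * cfc f A = cfc (fun x => f x ^ 2) A := by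
    rw [← star_eq_conjTranspose, (cfc_predicate f A).star_eq,
      cfc_pow f 2 A (hfin.continuousOn f), sq]
  rw [traceNorm_eq_re_trace_cfc_sqrt, hsq,
    ← cfc_comp' Real.sqrt _ A ((hfin.image _).continuousOn _) (hfin.continuousOn _),
    hA.trace_cfc]
  simp [Real.sqrt_sq_eq_abs]

lemma traceNorm_eq_sum_abs_eigenvalues {A : Matrix ι ι ℂ} (hA : A.IsHermitian) :
    traceNorm A = ∑ i, |hA.eigenvalues i| := by
  have h := traceNorm_cfc hA id
  rwa [cfc_id ℝ A] at h

lemma re_trace_le_traceNorm {A : Matrix ι ι ℂ} (hA : A.IsHermitian) :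
    A.trace.re ≤ traceNorm A := by
  rw [traceNorm_eq_sum_abs_eigenvalues hA, hA.trace_eq_sum_eigenvalues]
  simpa using Finset.sum_le_sum fun i _ => le_abs_self (hA.eigenvalues i)

lemma one_lt_traceNorm_of_not_posSemidef {A : Matrix ι ι ℂ} (hA : A.IsHermitian)
    (htr : A.trace = 1) (hA' : ¬ A.PosSemidef) : 1 < traceNorm A := by
  obtain ⟨i, hi⟩ : ∃ i, hA.eigenvalues i < 0 := by
    simpa [hA.posSemidef_iff_eigenvalues_nonneg, Pi.le_def] using hA'
  have hsum : ∑ i, hA.eigenvalues i = 1 := by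
    simpa [hA.trace_eq_sum_eigenvalues, ← Complex.ofReal_sum] using htr
  rw [traceNorm_eq_sum_abs_eigenvalues hA, ← hsum]
  exact Finset.sum_lt_sum (fun j _ => le_abs_self _)
    ⟨i, Finset.mem_univ i, by rw [abs_of_neg hi]; linarith⟩

lemma traceNorm_smul_add_smul_one_le {A : Matrix ι ι ℂ} (hA : A.IsHermitian) {ε : ℝ}
    (hε : 0 ≤ ε) :
    traceNorm ((traceNorm A + ε * Fintype.card ι)⁻¹ • (A + ε • (1 : Matrix ι ι ℂ))) ≤ 1 := by
  set s := traceNorm A + ε * Fintype.card ι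
  have hs : 0 ≤ s := add_nonneg (by rw [traceNorm_eq_sum_abs_eigenvalues hA]; positivity)
    (by positivity)
  rw [← cfc_affine hA, traceNorm_cfc hA]
  calc ∑ i, |s⁻¹ * (hA.eigenvalues i + ε)| ≤ ∑ i, s⁻¹ * (|hA.eigenvalues i| + ε) := by
        gcongr with i
        rw [abs_mul, abs_of_nonneg (inv_nonneg.mpr hs)]
        gcongr
        exact (abs_add_le _ _).trans_eq (by rw [abs_of_nonneg hε])
    _ = s⁻¹ * s := by
        rw [← Finset.mul_sum, Finset.sum_add_distrib, ← traceNorm_eq_sum_abs_eigenvalues hA]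
        simp [s, mul_comm]
    _ ≤ 1 := inv_mul_le_one_of_le₀ le_rfl hs

lemma relEnt_cfc_self {ρ : Matrix ι ι ℂ} (hρ : ρ.IsHermitian) (f : ℝ → ℝ) :
    relEnt ρ (cfc f ρ) = ∑ i, hρ.eigenvalues i *
      (Real.log (hρ.eigenvalues i) - Real.log (f (hρ.eigenvalues i))) := by
  have hfin := ρ.finite_real_spectrum
  have hprod : ρ * (cfc Real.log ρ - cfc (fun x => Real.log (f x)) ρ) =
      cfc (fun x => x * (Real.log x - Real.log (f x))) ρ := by
    rw [← cfc_sub _ _ ρ (hfin.continuousOn _) (hfin.continuousOn _),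
      cfc_mul _ _ ρ (hfin.continuousOn _) (hfin.continuousOn _), cfc_id' ℝ ρ]
  rw [relEnt, mfun_eq_cfc hρ, mfun_eq_cfc (cfc_predicate f ρ),
    ← cfc_comp' _ _ ρ ((hfin.image _).continuousOn _) (hfin.continuousOn _), hprod, hρ.trace_cfc]
  simp

lemma relEnt_smul_add_smul_one {ρ : Matrix ι ι ℂ} (hρ : ρ.PosSemidef) (hρtr : ρ.trace = 1)
    {c ε : ℝ} (hc : c ≠ 0) (hε : 0 < ε) :
    relEnt ρ (c • (ρ + ε • (1 : Matrix ι ι ℂ))) =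
      ∑ i, hρ.1.eigenvalues i * (Real.log (hρ.1.eigenvalues i) -
        Real.log (hρ.1.eigenvalues i + ε)) - Real.log c := by
  set p := hρ.1.eigenvalues
  have hsum : ∑ i, p i = 1 := by
    simpa [hρ.1.trace_eq_sum_eigenvalues, ← Complex.ofReal_sum] using hρtr
  have hterm i : p i * (Real.log (p i) - Real.log (c * (p i + ε))) =
      p i * (Real.log (p i) - Real.log (p i + ε)) - p i * Real.log c := by
    rw [Real.log_mul hc (by linarith [hρ.eigenvalues_nonneg i])]
    ring
  rw [← cfc_affine hρ.1, relEnt_cfc_self hρ.1, Finset.sum_congr rfl fun i _ => hterm i,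
    Finset.sum_sub_distrib, ← Finset.sum_mul, hsum, one_mul]

lemma sum_mul_log_eigenvalues_le_relEnt {ρ σ : Matrix ι ι ℂ} (hρ : ρ.PosSemidef)
    (hσ : σ.PosSemidef) (hσ1 : ∀ i, hσ.1.eigenvalues i ≤ 1) :
    ∑ i, hρ.1.eigenvalues i * Real.log (hρ.1.eigenvalues i) ≤ relEnt ρ σ := by
  have hfin := ρ.finite_real_spectrum
  have hsplit : relEnt ρ σ = (cfc (fun x => x * Real.log x) ρ).trace.re +
      (ρ * cfc (fun x => -Real.log x) σ).trace.re := by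
    rw [relEnt, mfun_eq_cfc hρ.1, mfun_eq_cfc hσ.1, cfc_neg, cfc_mul _ _ ρ (hfin.continuousOn _)
      (hfin.continuousOn _), cfc_id' ℝ ρ hρ.1.isSelfAdjoint, mul_sub, mul_neg, sub_eq_add_neg,
      trace_add, Complex.add_re]
  have hlog : 0 ≤ (ρ * cfc (fun x => -Real.log x) σ).trace.re :=
    (Complex.le_def.mp (hρ.trace_mul_nonneg (hσ.1.posSemidef_cfc (f := fun x => -Real.log x)
      fun i => neg_nonneg.mpr (Real.log_nonpos (hσ.eigenvalues_nonneg i) (hσ1 i))))).1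
  rw [hsplit, hρ.1.trace_cfc]
  simpa using hlog

end SpectralCalculus

section PartialTranspose

variable {m n : Type*}

lemma ptrans_isHermitian {A : Matrix (m × n) (m × n) ℂ} (hA : A.IsHermitian) :
    (ptrans A).IsHermitian := by
  ext p q
  exact hA.apply (p.1, q.2) (q.1, p.2)

lemma trace_ptrans [Fintype m] [Fintype n] (A : Matrix (m × n) (m × n) ℂ) :
    (ptrans A).trace = A.trace :=
  rfl

variable [DecidableEq m] [DecidableEq n]

lemma ptrans_one : ptrans (1 : Matrix (m × n) (m × n) ℂ) = 1 := by
  ext p q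
  simp only [ptrans, of_apply, one_apply, Prod.ext_iff]
  grind

lemma ptrans_smul_add_smul_one (A : Matrix (m × n) (m × n) ℂ) (a b : ℝ) :
    ptrans (a • (A + b • (1 : Matrix (m × n) (m × n) ℂ))) =
      a • (ptrans A + b • (1 : Matrix (m × n) (m × n) ℂ)) := by
  conv_rhs => rw [← ptrans_one]
  rfl

lemma bddBelow_relEnt_of_traceNorm_ptrans_le_one [Fintype m] [Fintype n]
    {ρ : Matrix (m × n) (m × n) ℂ} (hρ : ρ.PosSemidef) :
    BddBelow {r : ℝ | ∃ τ : Matrix (m × n) (m × n) ℂ,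
      τ.PosDef ∧ traceNorm (ptrans τ) ≤ 1 ∧ r = relEnt ρ τ} := by
  refine ⟨∑ i, hρ.1.eigenvalues i * Real.log (hρ.1.eigenvalues i), ?_⟩
  rintro _ ⟨τ, hτ, hτΓ, rfl⟩
  refine sum_mul_log_eigenvalues_le_relEnt hρ hτ.posSemidef
    (hτ.posSemidef.eigenvalues_le_of_re_trace_le ?_)
  rw [← trace_ptrans]
  exact (re_trace_le_traceNorm (ptrans_isHermitian hτ.1)).trans hτΓ

end PartialTranspose

theorem rains_bound_lt_logNegativity_of_posDef
    {m n : ℕ} (ρ : Matrix (Fin m × Fin n) (Fin m × Fin n) ℂ)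
    (hρ : ρ.PosDef) (hρtr : ρ.trace = 1) (hρΓ : ¬ (ptrans ρ).PosSemidef) :
    sInf {r : ℝ | ∃ τ : Matrix (Fin m × Fin n) (Fin m × Fin n) ℂ,
        τ.PosDef ∧ traceNorm (ptrans τ) ≤ 1 ∧ r = relEnt ρ τ} <
      Real.log (traceNorm (ptrans ρ)) := by
  set t := traceNorm (ptrans ρ)
  have ht : 1 < t := one_lt_traceNorm_of_not_posSemidef (ptrans_isHermitian hρ.1)
    (by rw [trace_ptrans, hρtr]) hρΓ
  have : Nonempty (Fin m × Fin n) := by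
    by_contra h
    simp [not_nonempty_iff.mp h, trace] at hρtr
  obtain ⟨ε, hε, hlt⟩ := exists_pos_sum_mul_log_sub_log_add_lt hρ.eigenvalues_pos ht
  set τ := (t + ε * Fintype.card (Fin m × Fin n))⁻¹ • (ρ + ε • (1 : Matrix _ _ ℂ))
  have hτ : τ.PosDef := (hρ.add_posSemidef (PosSemidef.one.smul hε.le)).smul (by positivity)
  have hτΓ : traceNorm (ptrans τ) ≤ 1 := by
    rw [ptrans_smul_add_smul_one]
    exact traceNorm_smul_add_smul_one_le (ptrans_isHermitian hρ.1) hε.le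
  have hrel : relEnt ρ τ = _ := relEnt_smul_add_smul_one hρ.posSemidef hρtr (by positivity) hε
  calc sInf _ ≤ relEnt ρ τ :=
        csInf_le (bddBelow_relEnt_of_traceNorm_ptrans_le_one hρ.posSemidef) ⟨τ, hτ, hτΓ, rfl⟩
    _ < Real.log t := by rwa [hrel, Real.log_inv, sub_neg_eq_add]
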